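/- Let $q \in (0,1]$, $\mu > 0$, $\gamma > 0$ be fixed and $\mathcal{W}_N, \mathcal{T}_N$ as above. Then $\lim_{N\to\infty}\left(1 - \left(1 - \sum_{j \geq \lceil 2\mathcal{W}_N\rceil} \frac{(q\mu\mathcal{T}_N)^j e^{-q\mu\mathcal{T}_N}}{j!}\right)^{\lfloor N/4\rfloor}\right) = 1$. -/

import Mathlib

/-!
The tail is at least its first Poisson weight, at `k = ⌈2 W_N⌉`. For large `N` the mean
`x = qμT_N` lies in `[1/log N, 1]` and `k ≤ log N`, so `k! ≤ (log N)^k` gives a weight of at least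
`(log N)^(-2k) e^(-1) = e^(-2k log log N - 1) ≥ e^(-log N / 2 - 2 log log N - 1)`.
Hence `⌊N/4⌋` times the tail grows like `√N / (log N)²`, and `(1 - p)^m ≤ e^(-mp) → 0`.
-/

open Real Filter

noncomputable def llog (N : ℕ) : ℝ := Real.log (Real.log N)
noncomputable def Wc (N : ℕ) : ℝ := Real.log N / (8 * llog N)
noncomputable def Tc (γ : ℝ) (N : ℕ) : ℝ := 16 * (llog N) ^ 2 / (γ * Real.log N)
noncomputable def wc (γ : ℝ) (N : ℕ) : ℝ := γ * Wc N / 2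
noncomputable def fc (d γ : ℝ) (N : ℕ) : ℝ :=
  d * (Real.exp ((wc γ N - d) * Tc γ N) - 1) /
    (wc γ N * Real.exp ((wc γ N - d) * Tc γ N) - d)
noncomputable def gc (d γ : ℝ) (N : ℕ) : ℝ :=
  wc γ N * (Real.exp ((wc γ N - d) * Tc γ N) - 1) /
    (wc γ N * Real.exp ((wc γ N - d) * Tc γ N) - d)

open Topology
open scoped Nat

noncomputable def poissonUpperTail (x : ℝ) (k : ℕ) : ℝ :=
  ∑' j : ℕ, if k ≤ j then x ^ j * exp (-x) / (j ! : ℝ) else 0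

section PoissonTail

variable {x : ℝ} (k : ℕ)

theorem hasSum_pow_div_factorial_mul_exp_neg (x : ℝ) :
    HasSum (fun j : ℕ => x ^ j / (j ! : ℝ) * exp (-x)) 1 := by
  have h := (NormedSpace.expSeries_div_hasSum_exp x).mul_right (exp (-x))
  rwa [← exp_eq_exp_ℝ, ← exp_add, add_neg_cancel, exp_zero] at h

theorem poissonUpperTail_summand_le (hx : 0 ≤ x) (j : ℕ) :
    (if k ≤ j then x ^ j * exp (-x) / (j ! : ℝ) else 0) ≤ x ^ j / (j ! : ℝ) * exp (-x) := by
  split_ifs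
  · rw [div_mul_eq_mul_div]
  · positivity

theorem summable_poissonUpperTail (hx : 0 ≤ x) :
    Summable fun j : ℕ => if k ≤ j then x ^ j * exp (-x) / (j ! : ℝ) else 0 :=
  .of_nonneg_of_le (fun j => by split_ifs <;> positivity) (poissonUpperTail_summand_le k hx)
    (hasSum_pow_div_factorial_mul_exp_neg x).summable

theorem poissonUpperTail_le_one (hx : 0 ≤ x) : poissonUpperTail x k ≤ 1 :=
  hasSum_le (poissonUpperTail_summand_le k hx) (summable_poissonUpperTail k hx).hasSum
    (hasSum_pow_div_factorial_mul_exp_neg x)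

theorem poissonTerm_le_poissonUpperTail (hx : 0 ≤ x) :
    x ^ k * exp (-x) / (k ! : ℝ) ≤ poissonUpperTail x k := by
  unfold poissonUpperTail
  simpa using (summable_poissonUpperTail k hx).le_tsum k fun j _ => by split_ifs <;> positivity

theorem inv_sq_pow_mul_exp_neg_le_poissonTerm {L : ℝ} (hL : 0 < L) (hk : (k : ℝ) ≤ L)
    (hx : L⁻¹ ≤ x) : (L ^ 2)⁻¹ ^ k * exp (-x) ≤ x ^ k * exp (-x) / (k ! : ℝ) := by
  have hfact : (k ! : ℝ) ≤ L ^ k := calc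
    (k ! : ℝ) ≤ (k : ℝ) ^ k := mod_cast k.factorial_le_pow
    _ ≤ L ^ k := pow_le_pow_left₀ k.cast_nonneg hk k
  have hpow : (L ^ k)⁻¹ ≤ x ^ k := by
    rw [← inv_pow]; exact pow_le_pow_left₀ (by positivity) hx k
  rw [mul_div_right_comm, inv_pow, ← pow_mul, mul_comm 2, pow_mul, ← inv_pow]
  gcongr
  calc (L ^ k)⁻¹ ^ 2 = (L ^ k)⁻¹ / L ^ k := by rw [sq, div_eq_mul_inv]
    _ ≤ x ^ k / (k ! : ℝ) :=
      div_le_div₀ ((inv_pos.2 (pow_pos hL k)).le.trans hpow) hpow (by positivity) hfact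

end PoissonTail

theorem tendsto_one_sub_pow_nhds_zero {ι : Type*} {l : Filter ι} {p : ι → ℝ} {m : ι → ℕ}
    (hp : ∀ i, p i ≤ 1) (h : Tendsto (fun i => (m i : ℝ) * p i) l atTop) :
    Tendsto (fun i => (1 - p i) ^ m i) l (𝓝 0) := by
  refine squeeze_zero (fun i => pow_nonneg (sub_nonneg.2 (hp i)) _) (fun i => ?_)
    (tendsto_exp_atBot.comp (tendsto_neg_atTop_atBot.comp h))
  calc (1 - p i) ^ m i ≤ exp (-p i) ^ m i :=
        pow_le_pow_left₀ (sub_nonneg.2 (hp i)) (by linarith [add_one_le_exp (-p i)]) _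
    _ = exp (-(m i * p i)) := by rw [← exp_nat_mul, mul_neg]

theorem tendsto_log_natCast_atTop : Tendsto (fun N : ℕ => log N) atTop atTop :=
  tendsto_log_atTop.comp tendsto_natCast_atTop_atTop

theorem tendsto_llog_atTop : Tendsto llog atTop atTop :=
  tendsto_log_atTop.comp tendsto_log_natCast_atTop

theorem tendsto_Tc_nhds_zero (γ : ℝ) : Tendsto (Tc γ) atTop (𝓝 0) := by
  have h : Tendsto (fun y : ℝ => log y ^ 2 / y) atTop (𝓝 0) := by
    simpa using tendsto_pow_log_div_mul_add_atTop 1 0 2 one_ne_zero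
  convert (h.comp tendsto_log_natCast_atTop).const_mul (16 / γ) using 1
  · ext N; simp only [Tc, llog, Function.comp_apply]; ring
  · rw [mul_zero]

theorem eventually_inv_log_le_mul_Tc {c γ : ℝ} (hc : 0 < c) (hγ : 0 < γ) :
    ∀ᶠ N : ℕ in atTop, (log N)⁻¹ ≤ c * Tc γ N := by
  filter_upwards [tendsto_llog_atTop.eventually_ge_atTop (max 1 (γ / (16 * c))),
    tendsto_log_natCast_atTop.eventually_gt_atTop 0] with N hl hL
  have hl1 : 1 ≤ llog N := le_of_max_le_left hl
  have hγl : γ ≤ 16 * c * llog N := (div_le_iff₀' (by positivity)).1 (le_of_max_le_right hl)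
  rw [Tc, mul_div_assoc', inv_eq_one_div, div_le_div_iff₀ hL (by positivity)]
  nlinarith [mul_le_mul_of_nonneg_left hl1 (by positivity : 0 ≤ 16 * c * llog N)]

theorem ceil_two_Wc_lt {N : ℕ} (hl : 0 ≤ llog N) :
    (⌈2 * Wc N⌉₊ : ℝ) < log N / (4 * llog N) + 1 := by
  have h2W : 2 * Wc N = log N / (4 * llog N) := by rw [Wc]; ring
  rw [← h2W]
  exact Nat.ceil_lt_add_one (by rw [h2W]; have := log_natCast_nonneg N; positivity)

theorem eventually_ceil_two_Wc_le_log : ∀ᶠ N : ℕ in atTop, (⌈2 * Wc N⌉₊ : ℝ) ≤ log N := by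
  filter_upwards [tendsto_llog_atTop.eventually_ge_atTop 1,
    tendsto_log_natCast_atTop.eventually_ge_atTop 2] with N hl hL
  have : log N / (4 * llog N) ≤ log N / 4 := by gcongr; linarith
  linarith [ceil_two_Wc_lt (zero_le_one.trans hl)]

theorem eventually_two_mul_llog_mul_ceil_two_Wc_le :
    ∀ᶠ N : ℕ in atTop, 2 * llog N * ⌈2 * Wc N⌉₊ ≤ log N / 2 + 2 * llog N := by
  filter_upwards [tendsto_llog_atTop.eventually_gt_atTop 0] with N hl
  calc 2 * llog N * ⌈2 * Wc N⌉₊ ≤ 2 * llog N * (log N / (4 * llog N) + 1) := by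
        gcongr; exact (ceil_two_Wc_lt hl.le).le
    _ = log N / 2 + 2 * llog N := by field_simp; ring

theorem natCast_div_eight_le_div_four {N : ℕ} (hN : 8 ≤ N) : (N : ℝ) / 8 ≤ (N / 4 : ℕ) := by
  have h : N < 4 * (N / 4) + 4 := by omega
  have h' : (N : ℝ) < 4 * (N / 4 : ℕ) + 4 := by exact_mod_cast h
  have hN' : (8 : ℝ) ≤ N := by exact_mod_cast hN
  linarith

theorem tendsto_log_div_two_sub_two_llog :
    Tendsto (fun N : ℕ => log N / 2 - 2 * llog N) atTop atTop := by
  have hdiv : Tendsto (fun y : ℝ => log y / y) atTop (𝓝 0) := by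
    simpa using tendsto_pow_log_div_mul_add_atTop 1 0 1 one_ne_zero
  have hfactor := (hdiv.const_mul 2).const_sub (1 / 2)
  rw [mul_zero, sub_zero] at hfactor
  have h : Tendsto (fun y : ℝ => y / 2 - 2 * log y) atTop atTop := by
    refine (tendsto_id.atTop_mul_pos (by norm_num) hfactor).congr' ?_
    filter_upwards [eventually_ne_atTop (0 : ℝ)] with y hy
    simp only [id]
    field_simp
  exact h.comp tendsto_log_natCast_atTop

theorem tendsto_div_four_mul_inv_log_sq_pow_ceil :
    Tendsto (fun N : ℕ => ((N / 4 : ℕ) : ℝ) * (log N ^ 2)⁻¹ ^ ⌈2 * Wc N⌉₊) atTop atTop := by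
  refine tendsto_atTop_mono' _ ?_
    (tendsto_exp_atTop.comp
      (tendsto_atTop_add_const_right _ (-log 8) tendsto_log_div_two_sub_two_llog))
  filter_upwards [eventually_two_mul_llog_mul_ceil_two_Wc_le, eventually_ge_atTop 8] with N hlk hN
  have hN0 : (0 : ℝ) < N := by positivity
  have hL : 0 < log N := log_pos (by exact_mod_cast (by omega : 1 < N))
  have hpow : (log N ^ 2)⁻¹ ^ ⌈2 * Wc N⌉₊ = exp (-(2 * llog N * ⌈2 * Wc N⌉₊)) := by
    rw [← exp_log hL, ← exp_nat_mul, ← exp_neg, ← exp_nat_mul, llog]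
    push_cast; ring_nf
  have h8 : exp (log N - log 8) = N / 8 := by
    rw [exp_sub, exp_log hN0, exp_log (by norm_num)]
  calc exp (log N / 2 - 2 * llog N + -log 8)
      = exp (log N - log 8) * exp (-(log N / 2 + 2 * llog N)) := by
        rw [← exp_add]; ring_nf
    _ = N / 8 * exp (-(log N / 2 + 2 * llog N)) := by rw [h8]
    _ ≤ (N / 4 : ℕ) * exp (-(2 * llog N * ⌈2 * Wc N⌉₊)) := by
        gcongr
        exact natCast_div_eight_le_div_four hN
    _ = _ := by rw [hpow]

theorem stmt_10 (q μ γ : ℝ) (hq : q ∈ Set.Ioc (0:ℝ) 1) (hμ : 0 < μ) (hγ : 0 < γ) :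
    Tendsto (fun N : ℕ =>
        1 - (1 - ∑' j : ℕ, if ⌈2 * Wc N⌉₊ ≤ j then
              (q * μ * Tc γ N) ^ j * Real.exp (-(q * μ * Tc γ N)) / (Nat.factorial j : ℝ)
            else 0) ^ (N / 4))
      atTop (nhds 1) := by
  have hc : 0 < q * μ := mul_pos hq.1 hμ
  have hx : ∀ N, 0 ≤ q * μ * Tc γ N := fun N =>
    mul_nonneg hc.le (div_nonneg (by positivity) (mul_nonneg hγ.le (log_natCast_nonneg N)))
  have hx1 : ∀ᶠ N in atTop, q * μ * Tc γ N ≤ 1 := by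
    have h := (tendsto_Tc_nhds_zero γ).const_mul (q * μ)
    rw [mul_zero] at h
    exact h.eventually (eventually_le_nhds one_pos)
  have hmass : Tendsto (fun N : ℕ => ((N / 4 : ℕ) : ℝ) *
      poissonUpperTail (q * μ * Tc γ N) ⌈2 * Wc N⌉₊) atTop atTop := by
    refine tendsto_atTop_mono' _ ?_
      (tendsto_div_four_mul_inv_log_sq_pow_ceil.atTop_mul_const (exp_pos (-1)))
    filter_upwards [eventually_inv_log_le_mul_Tc hc hγ, eventually_ceil_two_Wc_le_log, hx1,
      tendsto_log_natCast_atTop.eventually_gt_atTop 0] with N hxL hkL hxle hL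
    rw [mul_assoc]
    gcongr
    calc (log N ^ 2)⁻¹ ^ ⌈2 * Wc N⌉₊ * exp (-1)
        ≤ (log N ^ 2)⁻¹ ^ ⌈2 * Wc N⌉₊ * exp (-(q * μ * Tc γ N)) := by gcongr
      _ ≤ _ := inv_sq_pow_mul_exp_neg_le_poissonTerm _ hL hkL hxL
      _ ≤ _ := poissonTerm_le_poissonUpperTail _ (hx N)
  have h := (tendsto_one_sub_pow_nhds_zero
    (fun N => poissonUpperTail_le_one ⌈2 * Wc N⌉₊ (hx N)) hmass).const_sub 1
  rw [sub_zero] at h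
  exact h
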